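/- Let D be a digraph and let X be a set of new arcs such that: for every sink component T of D and every source component S of D, the digraph (V, X) contains a directed path from some vertex of T to some vertex of S. If additionally the underlying graph of D + X is connected and D has at least one source and one sink, and every terminal component is met by such a path, then D + X is strongly connected. -/

import Mathlib

def Reach {α : Type*} (A : Set (α × α)) (u v : α) : Prop :=
  Relation.ReflTransGen (fun x y => (x, y) ∈ A) u v

def Strong {α : Type*} (A : Set (α × α)) : Prop := ∀ u v : α, Reach A u v

def SameSCC {α : Type*} (A : Set (α × α)) (u v : α) : Prop := Reach A u v ∧ Reach A v u

def UndirReach {α : Type*} (A : Set (α × α)) (u v : α) : Prop :=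
  Relation.ReflTransGen (fun x y => (x, y) ∈ A ∨ (y, x) ∈ A) u v

def IsSourceComp {α : Type*} (A : Set (α × α)) (v : α) : Prop :=
  ∀ a b : α, (a, b) ∈ A → SameSCC A b v → SameSCC A a v

def IsSinkComp {α : Type*} (A : Set (α × α)) (v : α) : Prop :=
  ∀ a b : α, (a, b) ∈ A → SameSCC A a v → SameSCC A b v

theorem reach_mono {α : Type*} {A B : Set (α × α)} (h : A ⊆ B) {u v : α}
    (hr : Reach A u v) : Reach B u v :=
  Relation.ReflTransGen.mono (fun _ _ hx => h hx) u v hr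

theorem exists_sink {V : Type*} [Fintype V] (A : Set (V × V)) (v : V) :
    ∃ t, Reach A v t ∧ IsSinkComp A t := by
  haveI : IsTrans V (fun x y => Reach A y x ∧ ¬ Reach A x y) :=
    ⟨fun x y z hxy hyz => ⟨hyz.1.trans hxy.1, fun h => hyz.2 (hxy.1.trans h)⟩⟩
  haveI : IsIrrefl V (fun x y => Reach A y x ∧ ¬ Reach A x y) := ⟨fun x h => h.2 h.1⟩
  have hwf := Finite.wellFounded_of_trans_of_irrefl
    (fun x y : V => Reach A y x ∧ ¬ Reach A x y)
  obtain ⟨m, hm, hmin⟩ := hwf.has_min {x | Reach A v x} ⟨v, Relation.ReflTransGen.refl⟩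
  refine ⟨m, hm, ?_⟩
  intro a b hab hsamem
  have hma : Reach A m a := hsamem.2
  have hmb : Reach A m b := hma.trans (Relation.ReflTransGen.single hab)
  have hvb : Reach A v b := Relation.ReflTransGen.trans hm hmb
  have hbm : Reach A b m := by
    by_contra h
    exact hmin b hvb ⟨hmb, h⟩
  exact ⟨hbm, hmb⟩

theorem exists_source {V : Type*} [Fintype V] (A : Set (V × V)) (v : V) :
    ∃ s, Reach A s v ∧ IsSourceComp A s := by
  haveI : IsTrans V (fun x y => Reach A x y ∧ ¬ Reach A y x) :=
    ⟨fun x y z hxy hyz => ⟨hxy.1.trans hyz.1, fun h => hxy.2 (hyz.1.trans h)⟩⟩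
  haveI : IsIrrefl V (fun x y => Reach A x y ∧ ¬ Reach A y x) := ⟨fun x h => h.2 h.1⟩
  have hwf := Finite.wellFounded_of_trans_of_irrefl
    (fun x y : V => Reach A x y ∧ ¬ Reach A y x)
  obtain ⟨m, hm, hmin⟩ := hwf.has_min {x | Reach A x v} ⟨v, Relation.ReflTransGen.refl⟩
  refine ⟨m, hm, ?_⟩
  intro a b hab hsamem
  have hbm : Reach A b m := hsamem.1
  have ham : Reach A a m := (Relation.ReflTransGen.single hab).trans hbm
  have hav : Reach A a v := ham.trans hm
  have hma : Reach A m a := by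
    by_contra h
    exact hmin a hav ⟨ham, h⟩
  exact ⟨ham, hma⟩

/-- If, for every sink component `T` and source component `S` of `D`, the digraph `(V, X)`
contains a directed path from some vertex of `T` to some vertex of `S`, and moreover the
underlying graph of `D + X` is connected and `D` has at least one source component and one
sink component, then `D + X` is strongly connected. -/
theorem stmt5 {V : Type*} [Fintype V] (A X : Set (V × V))
    (hpaths : ∀ t₀ s₀ : V, IsSinkComp A t₀ → IsSourceComp A s₀ →
      ∃ t s : V, SameSCC A t t₀ ∧ SameSCC A s s₀ ∧ Reach X t s)
    (hconn : ∀ u v : V, UndirReach (A ∪ X) u v)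
    (hsource : ∃ s : V, IsSourceComp A s)
    (hsink : ∃ t : V, IsSinkComp A t) :
    Strong (A ∪ X) := by
  intro u v
  obtain ⟨t, hut, htsink⟩ := exists_sink A u
  obtain ⟨s, hsv, hssource⟩ := exists_source A v
  obtain ⟨t', s', htt', hss', hrX⟩ := hpaths t s htsink hssource
  have hA : A ⊆ A ∪ X := Set.subset_union_left
  have hX : X ⊆ A ∪ X := Set.subset_union_right
  exact (reach_mono hA hut).trans <| (reach_mono hA htt'.2).trans <|
    (reach_mono hX hrX).trans <| (reach_mono hA hss'.1).trans (reach_mono hA hsv)
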